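/- Assume ω* < ω_max. With h(ω) := exp(ω)/(1 − exp(ω)) and the strictly increasing sequence ω^c_0 := ω*, ω^c_n := log(1 − exp(υ̂ − β·ω^c_{n−1})) for n ≥ 1, the limit lim_{n→∞} (δ/β)^{n−1}·∏_{j=1}^n h(ω^c_j) = +∞. -/

import Mathlib

/-!
Write `f c = log c + β log (1 - c)` and `c* = δ / (β + δ)`, so that `ω* = log (1 - c*)`.
The function `f` is increasing below `1 / (1 + β)`, and `c_min < c* < 1 / (1 + β)`; hence
`υ̂ < f c*`, i.e. `exp (υ̂ - β ω*) < c*`. This keeps the map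
`ω ↦ log (1 - exp (υ̂ - β ω))` well defined and increasing on `[ω*, ∞)` and pushes `ω*` up,
so the sequence `ω^c` increases (and stays negative). As `h` is increasing on `(-∞, 0)`, every
factor `h (ω^c_j)` with `j ≥ 1` is at least `h (ω^c_1) > h (ω*) = β / δ`, and the expression
grows at least geometrically with ratio `(δ / β) h (ω^c_1) > 1`.
-/

open Real Set Filter Finset

lemma log_add_mul_log_one_sub_lt_of_lt {β c c' : ℝ} (hβ : 0 ≤ β) (hc : 0 < c) (hcc' : c < c')
    (hc' : c' * (1 + β) < 1) :
    log c + β * log (1 - c) < log c' + β * log (1 - c') := by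
  have hc'0 : 0 < c' := hc.trans hcc'
  have h1c' : 0 < 1 - c' := by nlinarith
  have h1c : 0 < 1 - c := by linarith
  have hlog : (c' - c) / c' ≤ log c' - log c := by
    rw [← log_div hc'0.ne' hc.ne']
    convert one_sub_inv_le_log_of_pos (div_pos hc'0 hc) using 1
    field_simp
  have hlog_one_sub : (c - c') / (1 - c') ≤ log (1 - c') - log (1 - c) := by
    rw [← log_div h1c'.ne' h1c.ne']
    convert one_sub_inv_le_log_of_pos (div_pos h1c' h1c) using 1
    field_simp
    ring
  -- The two tangent-line bounds suffice, since `β c' < 1 - c'` makes their sum positive.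
  have hpos : 0 < (c' - c) / c' + β * ((c - c') / (1 - c')) := by
    have hsum : (c' - c) / c' + β * ((c - c') / (1 - c'))
        = (c' - c) * (1 - c' - β * c') / (c' * (1 - c')) := by
      field_simp
      ring
    rw [hsum]
    exact div_pos (mul_pos (sub_pos.2 hcc') (by nlinarith)) (by positivity)
  nlinarith [mul_le_mul_of_nonneg_left hlog_one_sub hβ]

lemma strictMono_of_strictMonoOn_Ici_of_lt_map {α : Type*} [Preorder α] {g : α → α} {a : α}
    {w : ℕ → α} (hg : StrictMonoOn g (Ici a)) (ha : a < g a) (hw0 : w 0 = a)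
    (hwrec : ∀ n, w (n + 1) = g (w n)) : StrictMono w := by
  have hinv : ∀ n, a ≤ w n ∧ w n < w (n + 1) := by
    intro n
    induction n with
    | zero => exact ⟨hw0.ge, by rw [hwrec, hw0]; exact ha⟩
    | succ n ih =>
      have hle : a ≤ w (n + 1) := ih.1.trans ih.2.le
      exact ⟨hle, (hwrec n).trans_lt ((hg ih.1 hle ih.2).trans_eq (hwrec (n + 1)).symm)⟩
  exact strictMono_nat_of_lt_succ fun n => (hinv n).2

section Recursion

variable {υ β c : ℝ} {w : ℕ → ℝ}

lemma exp_sub_mul_lt_of_ge (hβ : 0 ≤ β) (hc : 0 < c) (hυ : υ - β * log (1 - c) < log c)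
    {x : ℝ} (hx : log (1 - c) ≤ x) : exp (υ - β * x) < c := by
  calc exp (υ - β * x) ≤ exp (υ - β * log (1 - c)) := exp_le_exp.2 (by nlinarith)
    _ < exp (log c) := exp_lt_exp.2 hυ
    _ = c := exp_log hc

lemma strictMonoOn_log_one_sub_exp (hβ : 0 < β) (hc : 0 < c) (hc1 : c < 1)
    (hυ : υ - β * log (1 - c) < log c) :
    StrictMonoOn (fun x => log (1 - exp (υ - β * x))) (Ici (log (1 - c))) := by
  intro x hx y _ hxy
  have hx1 := exp_sub_mul_lt_of_ge hβ.le hc hυ hx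
  have hyx : exp (υ - β * y) < exp (υ - β * x) := exp_lt_exp.2 (by nlinarith)
  exact log_lt_log (by linarith) (by linarith)

lemma strictMono_and_neg_of_rec (hβ : 0 < β) (hc : 0 < c) (hc1 : c < 1)
    (hυ : υ - β * log (1 - c) < log c) (hw0 : w 0 = log (1 - c))
    (hwrec : ∀ n, w (n + 1) = log (1 - exp (υ - β * w n))) :
    StrictMono w ∧ ∀ n, w n < 0 := by
  have hmono := strictMonoOn_log_one_sub_exp hβ hc hc1 hυ
  have hstart : log (1 - c) < log (1 - exp (υ - β * log (1 - c))) :=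
    log_lt_log (by linarith) (by linarith [exp_sub_mul_lt_of_ge hβ.le hc hυ le_rfl])
  have hw := strictMono_of_strictMonoOn_Ici_of_lt_map hmono hstart hw0 hwrec
  refine ⟨hw, fun n => (hw (Nat.lt_succ_self n)).trans ?_⟩
  have hwn : log (1 - c) ≤ w n := hw0 ▸ hw.monotone (Nat.zero_le n)
  rw [hwrec]
  exact log_neg (by linarith [exp_sub_mul_lt_of_ge hβ.le hc hυ hwn])
    (by linarith [exp_pos (υ - β * w n)])

end Recursion

lemma strictMonoOn_exp_div_one_sub_exp :
    StrictMonoOn (fun x => exp x / (1 - exp x)) (Iio 0) := by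
  intro x hx y hy hxy
  have hx1 : 0 < 1 - exp x := by linarith [exp_lt_one_iff.2 hx]
  have hy1 : 0 < 1 - exp y := by linarith [exp_lt_one_iff.2 hy]
  have hexp : exp x < exp y := exp_lt_exp.2 hxy
  rw [div_lt_div_iff₀ hx1 hy1]
  nlinarith

lemma tendsto_pow_mul_prod_Icc_atTop {q b : ℝ} {u : ℕ → ℝ} (hq : 0 ≤ q) (hb : 0 < b)
    (hqb : 1 < q * b) (hu : ∀ j, 1 ≤ j → b ≤ u j) :
    Tendsto (fun n => q ^ (n - 1) * ∏ j ∈ Icc 1 n, u j) atTop atTop := by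
  have hlow : ∀ n, 1 ≤ n →
      b * (q * b) ^ (n - 1) ≤ q ^ (n - 1) * ∏ j ∈ Icc 1 n, u j := by
    intro n hn
    have hprod : b ^ n ≤ ∏ j ∈ Icc 1 n, u j := by
      calc b ^ n = ∏ _j ∈ Icc 1 n, b := by rw [prod_const, Nat.card_Icc, Nat.add_sub_cancel]
        _ ≤ ∏ j ∈ Icc 1 n, u j :=
          prod_le_prod (fun _ _ => hb.le) fun j hj => hu j (mem_Icc.1 hj).1
    calc b * (q * b) ^ (n - 1) = q ^ (n - 1) * b ^ n := by
          rw [mul_pow, mul_left_comm, ← pow_succ', Nat.sub_add_cancel hn]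
      _ ≤ q ^ (n - 1) * ∏ j ∈ Icc 1 n, u j := mul_le_mul_of_nonneg_left hprod (by positivity)
  refine tendsto_atTop_mono' _ ?_ (((tendsto_pow_atTop_atTop_of_one_lt hqb).comp
    (tendsto_sub_atTop_nat 1)).const_mul_atTop hb)
  filter_upwards [eventually_ge_atTop 1] with n hn
  exact hlow n hn

theorem stmt_9_general (β δ s cmin : ℝ)
    (hβ : β ∈ Set.Ioc (0 : ℝ) 1) (hδ : δ ∈ Set.Ioo (0 : ℝ) 1)
    (hs2 : s < 1)
    (hcmin : cmin ∈ Set.Ioo (0 : ℝ) s)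
    (hcmineq : log cmin + β * log (1 - cmin) = log s + β * log (1 - s))
    (hωlt : log (β / (β + δ)) < log (1 - cmin))
    (w : ℕ → ℝ) (hw0 : w 0 = log (β / (β + δ)))
    (hwrec : ∀ n, w (n + 1) = log (1 - exp ((log s + β * log (1 - s)) - β * w n))) :
    Filter.Tendsto
      (fun n : ℕ => (δ / β) ^ (n - 1) *
        ∏ j ∈ Finset.Icc 1 n, exp (w j) / (1 - exp (w j)))
      Filter.atTop Filter.atTop := by
  obtain ⟨hβ0, -⟩ := hβ
  obtain ⟨hδ0, hδ1⟩ := hδ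
  obtain ⟨hc0, hcs⟩ := hcmin
  have hβδ : 0 < β + δ := by linarith
  have hone_sub : 1 - δ / (β + δ) = β / (β + δ) := by field_simp; ring
  have hcmin_lt : cmin < δ / (β + δ) := by
    have := (log_lt_log_iff (by positivity) (by linarith)).1 hωlt
    linarith
  have hcstar : δ / (β + δ) * (1 + β) < 1 := by
    rw [div_mul_eq_mul_div, div_lt_one hβδ]; nlinarith
  have hυ : (log s + β * log (1 - s)) - β * log (1 - δ / (β + δ)) < log (δ / (β + δ)) := by
    have := log_add_mul_log_one_sub_lt_of_lt hβ0.le hc0 hcmin_lt hcstar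
    linarith
  obtain ⟨hw, hneg⟩ := strictMono_and_neg_of_rec hβ0 (by positivity)
    (by rw [div_lt_one hβδ]; linarith) hυ (hw0.trans (congrArg log hone_sub).symm) hwrec
  have hh0 : exp (w 0) / (1 - exp (w 0)) = β / δ := by
    rw [hw0, exp_log (by positivity), ← hone_sub, sub_sub_cancel]
    field_simp
    ring
  have hh1 : β / δ < exp (w 1) / (1 - exp (w 1)) :=
    hh0 ▸ strictMonoOn_exp_div_one_sub_exp (hneg 0) (hneg 1) (hw Nat.one_pos)
  refine tendsto_pow_mul_prod_Icc_atTop (by positivity) ((div_pos hβ0 hδ0).trans hh1) ?_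
    fun j hj => strictMonoOn_exp_div_one_sub_exp.monotoneOn (hneg 1) (hneg j) (hw.monotone hj)
  calc (1 : ℝ) = δ / β * (β / δ) := by field_simp
    _ < δ / β * (exp (w 1) / (1 - exp (w 1))) := by gcongr

/-- With `h ω = exp ω / (1 - exp ω)` and the strictly increasing sequence
`ω^c_0 = ω*`, `ω^c_{n+1} = log (1 - exp (υ̂ - β ω^c_n))`, the limit
`lim_n (δ/β)^(n-1) * ∏_{j=1}^n h (ω^c_j) = +∞`. -/
theorem stmt_9 (β δ s cmin : ℝ)
    (hβ : β ∈ Set.Ioc (0 : ℝ) 1) (hδ : δ ∈ Set.Ioo (0 : ℝ) 1)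
    (hs1 : 1 / (1 + β) < s) (hs2 : s < 1)
    (hcmin : cmin ∈ Set.Ioo (0 : ℝ) s)
    (hcmineq : log cmin + β * log (1 - cmin) = log s + β * log (1 - s))
    (hωlt : log (β / (β + δ)) < log (1 - cmin))
    (w : ℕ → ℝ) (hw0 : w 0 = log (β / (β + δ)))
    (hwrec : ∀ n, w (n + 1) = log (1 - exp ((log s + β * log (1 - s)) - β * w n))) :
    Filter.Tendsto
      (fun n : ℕ => (δ / β) ^ (n - 1) *
        ∏ j ∈ Finset.Icc 1 n, exp (w j) / (1 - exp (w j)))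
      Filter.atTop Filter.atTop :=
  stmt_9_general β δ s cmin hβ hδ hs2 hcmin hcmineq hωlt w hw0 hwrec
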